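/- Let r ≥ 1 be a natural number, p = r+1, N = 2r+1, and λ_k(R, R+1) the k-th eigenvalue of (|v'|^{p−2}v')' + λ q_R(t) |v|^{p−2}v = 0 on (0,1), v(0)=v(1)=0, with q_R(t) = (R²+R)^{r+1}/(R+1−t)^{2(r+1)}. Assuming Zhang's estimate (kπ_p/∫₀¹max{1,q_R})^p ≤ λ_k(R,R+1) ≤ (kπ_p/∫₀¹min{1,q_R})^p, one has lim_{R→+∞} λ_k(R, R+1) = (kπ_{r+1})^{r+1}. -/

import Mathlib

/-! For `t ∈ [0, 1]` the denominator `(R + 1 - t)²` lies between `R²` and `(R + 1)²`, so the weight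
`q_R(t) = (R² + R)^p / (R + 1 - t)^{2p}` is squeezed between `(R / (R + 1))^p` and `((R + 1) / R)^p`.
Both bounds tend to `1`, hence `q_R → 1` uniformly on `[0, 1]` and so do `min 1 q_R` and `max 1 q_R`;
their integrals over `[0, 1]` tend to `1`, and Zhang's two-sided estimate squeezes `λ_k(R, R + 1)`
between two quantities converging to `(k π_p)^p`. -/

open Filter Set MeasureTheory Topology

theorem tendsto_intervalIntegral_of_forall_mem_Icc {ι : Type*} {l : Filter ι} {f : ι → ℝ → ℝ}
    {a b : ι → ℝ} {u v L : ℝ} (huv : u ≤ v) (ha : Tendsto a l (𝓝 L)) (hb : Tendsto b l (𝓝 L))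
    (hf : ∀ᶠ i in l, IntervalIntegrable (f i) volume u v ∧ ∀ x ∈ Icc u v, f i x ∈ Icc (a i) (b i)) :
    Tendsto (fun i => ∫ x in u..v, f i x) l (𝓝 ((v - u) * L)) := by
  refine tendsto_of_tendsto_of_tendsto_of_le_of_le' (ha.const_mul (v - u)) (hb.const_mul (v - u))
    ?_ ?_
  · filter_upwards [hf] with i ⟨hint, hmem⟩
    simpa using intervalIntegral.integral_mono_on huv intervalIntegrable_const hint
      fun x hx => (hmem x hx).1
  · filter_upwards [hf] with i ⟨hint, hmem⟩
    simpa using intervalIntegral.integral_mono_on huv hint intervalIntegrable_const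
      fun x hx => (hmem x hx).2

theorem tendsto_add_one_div_self_atTop : Tendsto (fun R : ℝ => (R + 1) / R) atTop (𝓝 1) := by
  have h : Tendsto (fun R : ℝ => 1 + R⁻¹) atTop (𝓝 (1 + 0)) :=
    tendsto_const_nhds.add tendsto_inv_atTop_zero
  rw [add_zero] at h
  refine h.congr' ?_
  filter_upwards [eventually_ne_atTop (0 : ℝ)] with R hR
  field_simp

theorem tendsto_div_self_add_one_atTop : Tendsto (fun R : ℝ => R / (R + 1)) atTop (𝓝 1) := by
  simpa only [inv_div, inv_one] using tendsto_add_one_div_self_atTop.inv₀ one_ne_zero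

/-- The weight `q_R` of the paper, with `n = r + 1`. -/
noncomputable def annulusWeight (n : ℕ) (R t : ℝ) : ℝ := (R ^ 2 + R) ^ n / (R + 1 - t) ^ (2 * n)

theorem annulusWeight_mem_Icc (n : ℕ) {R t : ℝ} (hR : 0 < R) (ht : t ∈ Icc (0 : ℝ) 1) :
    annulusWeight n R t ∈ Icc ((R / (R + 1)) ^ n) (((R + 1) / R) ^ n) := by
  obtain ⟨ht0, ht1⟩ := ht
  have hd : 0 < R + 1 - t := by linarith
  have hbase : R / (R + 1) ≤ (R ^ 2 + R) / (R + 1 - t) ^ 2 ∧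
      (R ^ 2 + R) / (R + 1 - t) ^ 2 ≤ (R + 1) / R := by
    constructor
    · rw [div_le_div_iff₀ (by positivity) (by positivity)]
      nlinarith [pow_le_pow_left₀ hd.le (by linarith : R + 1 - t ≤ R + 1) 2]
    · rw [div_le_div_iff₀ (by positivity) hR]
      nlinarith [pow_le_pow_left₀ hR.le (by linarith : R ≤ R + 1 - t) 2]
  rw [annulusWeight, pow_mul, ← div_pow]
  exact ⟨pow_le_pow_left₀ (by positivity) hbase.1 n, pow_le_pow_left₀ (by positivity) hbase.2 n⟩

theorem continuousOn_annulusWeight (n : ℕ) {R : ℝ} (hR : 0 < R) :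
    ContinuousOn (annulusWeight n R) (Icc 0 1) := by
  refine continuousOn_const.div (by fun_prop) fun t ht => ?_
  have : 0 < R + 1 - t := by linarith [ht.2]
  positivity

theorem tendsto_integral_annulusWeight_of_mem_Icc (n : ℕ) {g : ℝ → ℝ} (hg : Continuous g)
    (hmem : ∀ {a b x : ℝ}, a ≤ 1 → 1 ≤ b → x ∈ Icc a b → g x ∈ Icc a b) :
    Tendsto (fun R => ∫ t in (0 : ℝ)..1, g (annulusWeight n R t)) atTop (𝓝 1) := by
  have hlim := tendsto_intervalIntegral_of_forall_mem_Icc (f := fun R t => g (annulusWeight n R t))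
    zero_le_one (tendsto_div_self_add_one_atTop.pow n) (tendsto_add_one_div_self_atTop.pow n) ?_
  · simpa using hlim
  filter_upwards [eventually_gt_atTop (0 : ℝ)] with R hR
  refine ⟨ContinuousOn.intervalIntegrable ?_, fun t ht => hmem ?_ ?_ (annulusWeight_mem_Icc n hR ht)⟩
  · rw [uIcc_of_le zero_le_one]
    exact hg.comp_continuousOn (continuousOn_annulusWeight n hR)
  · exact pow_le_one₀ (by positivity) ((div_le_one (by positivity)).2 (by linarith))
  · exact one_le_pow₀ ((one_le_div hR).2 (by linarith))

theorem tendsto_integral_min_one_annulusWeight (n : ℕ) :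
    Tendsto (fun R => ∫ t in (0 : ℝ)..1, min 1 (annulusWeight n R t)) atTop (𝓝 1) :=
  tendsto_integral_annulusWeight_of_mem_Icc n (continuous_const.min continuous_id)
    fun ha hb hx => ⟨le_min ha hx.1, (min_le_left _ _).trans hb⟩

theorem tendsto_integral_max_one_annulusWeight (n : ℕ) :
    Tendsto (fun R => ∫ t in (0 : ℝ)..1, max 1 (annulusWeight n R t)) atTop (𝓝 1) :=
  tendsto_integral_annulusWeight_of_mem_Icc n (continuous_const.max continuous_id)
    fun ha hb hx => ⟨ha.trans (le_max_left _ _), max_le hb hx.2⟩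

theorem stmt19_general (r : ℕ) (k : ℕ)
    (πp : ℝ)
    (lam : ℝ → ℝ)
    (hZhang : ∀ R > (0 : ℝ),
      ((k : ℝ) * πp /
          ∫ t in (0:ℝ)..1, max 1 ((R ^ 2 + R) ^ (r + 1) / (R + 1 - t) ^ (2 * (r + 1))))
            ^ (r + 1) ≤ lam R ∧
      lam R ≤
        ((k : ℝ) * πp /
          ∫ t in (0:ℝ)..1, min 1 ((R ^ 2 + R) ^ (r + 1) / (R + 1 - t) ^ (2 * (r + 1))))
            ^ (r + 1)) :
    Filter.Tendsto lam Filter.atTop (nhds (((k : ℝ) * πp) ^ (r + 1))) := by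
  have hbound : ∀ {I : ℝ → ℝ}, Tendsto I atTop (𝓝 1) →
      Tendsto (fun R => ((k : ℝ) * πp / I R) ^ (r + 1)) atTop (𝓝 (((k : ℝ) * πp) ^ (r + 1))) :=
    fun hI => by simpa using (tendsto_const_nhds.div hI one_ne_zero).pow (r + 1)
  exact tendsto_of_tendsto_of_tendsto_of_le_of_le'
    (hbound (tendsto_integral_max_one_annulusWeight (r + 1)))
    (hbound (tendsto_integral_min_one_annulusWeight (r + 1)))
    ((eventually_gt_atTop 0).mono fun R hR => (hZhang R hR).1)
    ((eventually_gt_atTop 0).mono fun R hR => (hZhang R hR).2)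

theorem stmt19 (r : ℕ) (hr : 1 ≤ r) (k : ℕ) (hk : 1 ≤ k)
    (πp : ℝ)
    (hπp : πp = 2 * Real.pi * ((r + 1 : ℝ) - 1) ^ ((1 : ℝ) / (r + 1 : ℝ)) /
      ((r + 1 : ℝ) * Real.sin (Real.pi / (r + 1 : ℝ))))
    (lam : ℝ → ℝ)
    (hZhang : ∀ R > (0 : ℝ),
      ((k : ℝ) * πp /
          ∫ t in (0:ℝ)..1, max 1 ((R ^ 2 + R) ^ (r + 1) / (R + 1 - t) ^ (2 * (r + 1))))
            ^ (r + 1) ≤ lam R ∧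
      lam R ≤
        ((k : ℝ) * πp /
          ∫ t in (0:ℝ)..1, min 1 ((R ^ 2 + R) ^ (r + 1) / (R + 1 - t) ^ (2 * (r + 1))))
            ^ (r + 1)) :
    Filter.Tendsto lam Filter.atTop (nhds (((k : ℝ) * πp) ^ (r + 1))) :=
  stmt19_general r k πp lam hZhang
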